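/- arXiv:2205.11991 — 7 statements merged into one kernel-verified Lean document; each statement's English description precedes it below -/
import Mathlib

section
/- Let X ⊆ ℝⁿ be compact, f : X × U × N → X a Lipschitz continuous dynamics function, π : X → U a Lipschitz continuous policy, and d a probability distribution on N. Let X_s ⊆ X be Borel measurable with nonempty interior and closed under the system dynamics, i.e. for every x ∈ X_s and every ω ∈ N, f(x, π(x), ω) ∈ X_s. Suppose there exists a ranking supermartingale for X_s, i.e. a nonnegative continuous function V : X → ℝ and an ε > 0 such that for every x ∈ X \ X_s, E_{ω∼d}[V(f(x, π(x), ω))] ≤ V(x) − ε. Then X_s is almost-surely asymptotically stable: for every initial state x₀ ∈ X, for d^ℕ-almost every noise sequence ω = (ω₀, ω₁, …) ∈ N^ℕ, the trajectory x_{t+1} = f(x_t, π(x_t), ω_t) satisfies lim_{t→∞} inf_{y∈X_s} ‖x_t − y‖₁ = 0. -/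
/-!
Consider the process equal to `V(x_t) + ε t` as long as the trajectory has not met `Xs`, and
to `0` afterwards. Its expectation is at most `V(x₀)` for every `t`: conditioning on the first
noise sample `ω₀` turns the trajectory from `x₀` into the one from `f(x₀, π(x₀), ω₀)` driven by
the shifted noise, which is independent of `ω₀` and again `d^ℕ`-distributed, so induction on
`t` over all initial states applies and the ranking condition pays for the extra `ε`. Hence
`ε t · P(no visit to Xs before t) ≤ V(x₀)`, almost every trajectory visits `Xs`, and by
invariance it stays there, so its distance to `Xs` is eventually `0`.
-/

open MeasureTheory Filter

/-- ℝⁿ equipped with the ℓ¹ norm. -/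
abbrev L1 (n : ℕ) := PiLp 1 fun _ : Fin n => ℝ

instance (n : ℕ) : MeasurableSpace (L1 n) := MeasurableSpace.comap WithLp.ofLp MeasurableSpace.pi
instance (n : ℕ) : BorelSpace (L1 n) := PiLp.borelSpace 1

/-- Trajectory of the closed-loop system `x_{t+1} = f(x_t, π(x_t), ω_t)`. -/
def traj {X U N : Type*} (f : X → U → N → X) (π : X → U)
    (x₀ : X) (ω : ℕ → N) : ℕ → X
  | 0 => x₀
  | t + 1 => f (traj f π x₀ ω t) (π (traj f π x₀ ω t)) (ω t)

open ProbabilityTheory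

theorem LipschitzWith.uncurry₃_of_dist_le {α β γ δ : Type*} [PseudoMetricSpace α]
    [PseudoMetricSpace β] [PseudoMetricSpace γ] [PseudoMetricSpace δ] {g : α → β → γ → δ}
    {K : NNReal} (hg : ∀ a a' b b' c c', dist (g a b c) (g a' b' c') ≤
      K * (dist a a' + dist b b' + dist c c')) :
    LipschitzWith (3 * K) fun p : α × β × γ => g p.1 p.2.1 p.2.2 := by
  refine LipschitzWith.of_dist_le_mul fun p q => (hg _ _ _ _ _ _).trans ?_
  have h1 : dist p.1 q.1 ≤ dist p q := le_max_left _ _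
  have h2 : dist p.2.1 q.2.1 ≤ dist p q := (le_max_left _ _).trans (le_max_right _ _)
  have h3 : dist p.2.2 q.2.2 ≤ dist p q := (le_max_right _ _).trans (le_max_right _ _)
  push_cast
  nlinarith [K.coe_nonneg]

section HeadTail

variable {α : Type*} [MeasurableSpace α] (ν : Measure α) [IsProbabilityMeasure ν]

theorem indepFun_head_tail_infinitePi :
    IndepFun (fun ω : ℕ → α => ω 0) (fun ω n => ω (n + 1)) (Measure.infinitePi fun _ => ν) := by
  have hcoord := iIndepFun_infinitePi (P := fun _ : ℕ => ν) (X := fun _ => id)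
    fun _ => measurable_id
  have hsplit := indep_iSup_of_disjoint (fun i => (measurable_pi_apply i).comap_le)
    ((iIndepFun_iff_iIndep _ _ _).1 hcoord) (S := {0}) (T := Set.Ioi 0) (by simp)
  rw [IndepFun_iff_Indep]
  refine indep_of_indep_of_le_right (indep_of_indep_of_le_left hsplit ?_) ?_
  · exact le_iSup₂_of_le (f := fun i (_ : i ∈ ({0} : Set ℕ)) => _) 0 rfl le_rfl
  · rw [MeasurableSpace.pi, MeasurableSpace.comap_iSup]
    refine iSup_le fun n => ?_
    rw [MeasurableSpace.comap_comp]
    exact le_iSup₂_of_le (f := fun i (_ : i ∈ Set.Ioi 0) => _) (n + 1) n.succ_pos le_rfl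

theorem map_head_tail_infinitePi :
    (Measure.infinitePi fun _ : ℕ => ν).map (fun ω => (ω 0, fun n => ω (n + 1)))
      = ν.prod (Measure.infinitePi fun _ => ν) := by
  rw [(indepFun_head_tail_infinitePi ν).map_prod_eq_prod_map_map
      (measurable_pi_apply 0).aemeasurable
      (measurable_pi_lambda _ fun n => measurable_pi_apply (n + 1)).aemeasurable,
    Measure.infinitePi_map_eval,
    Measure.map_infinitePi_infinitePi_of_inj (f := Nat.succ) Nat.succ_injective]

theorem lintegral_head_tail_infinitePi {g : α × (ℕ → α) → ENNReal} (hg : Measurable g) :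
    ∫⁻ ω, g (ω 0, fun n => ω (n + 1)) ∂(Measure.infinitePi fun _ => ν)
      = ∫⁻ w, ∫⁻ ω, g (w, ω) ∂(Measure.infinitePi fun _ => ν) ∂ν := by
  rw [← lintegral_map hg (by fun_prop), map_head_tail_infinitePi, lintegral_prod _ hg.aemeasurable]

end HeadTail

section Trajectory

variable {X U N : Type*} (f : X → U → N → X) (π : X → U)

theorem traj_succ_eq_traj_tail (x : X) (ω : ℕ → N) (t : ℕ) :
    traj f π x ω (t + 1) = traj f π (f x (π x) (ω 0)) (fun n => ω (n + 1)) t := by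
  induction t with
  | zero => rfl
  | succ t ih => rw [traj, ih]; rfl

theorem traj_mem_of_le {S : Set X} (hS : ∀ x ω, x ∈ S → f x (π x) ω ∈ S) {x : X}
    {ω : ℕ → N} {s t : ℕ} (hs : traj f π x ω s ∈ S) (hst : s ≤ t) : traj f π x ω t ∈ S := by
  induction t, hst using Nat.le_induction with
  | base => exact hs
  | succ t _ ih => exact hS _ _ ih

variable [MeasurableSpace X] [MeasurableSpace N]

theorem measurable_traj (hstep : Measurable fun q : X × N => f q.1 (π q.1) q.2) (t : ℕ) :
    Measurable fun q : X × (ℕ → N) => traj f π q.1 q.2 t := by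
  induction t with
  | zero => exact measurable_fst
  | succ t ih => exact hstep.comp (ih.prodMk ((measurable_pi_apply t).comp measurable_snd))

end Trajectory

section RankingSupermartingale

open scoped ENNReal

variable {X U N : Type*} (f : X → U → N → X) (π : X → U) (S : Set X) (V : X → ℝ) (ε : ℝ)

open Classical in
noncomputable def survivalPotential (t : ℕ) (x : X) (ω : ℕ → N) : ℝ≥0∞ :=
  if ∀ s < t, traj f π x ω s ∉ S then ENNReal.ofReal (V (traj f π x ω t)) + t * ENNReal.ofReal ε
  else 0

theorem survivalPotential_succ_of_mem {x : X} (hx : x ∈ S) (t : ℕ) (ω : ℕ → N) :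
    survivalPotential f π S V ε (t + 1) x ω = 0 :=
  if_neg fun h => h 0 t.succ_pos hx

theorem survivalPotential_succ_le (x : X) (t : ℕ) (ω : ℕ → N) :
    survivalPotential f π S V ε (t + 1) x ω ≤
      survivalPotential f π S V ε t (f x (π x) (ω 0)) (fun n => ω (n + 1)) + ENNReal.ofReal ε := by
  rw [survivalPotential, survivalPotential]
  split_ifs with h h'
  · rw [traj_succ_eq_traj_tail]; push_cast; rw [add_one_mul, add_assoc]
  · exact absurd (fun s hs => traj_succ_eq_traj_tail f π x ω s ▸ h (s + 1) (by omega)) h'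
  all_goals exact zero_le

variable {f π S V ε} [MeasurableSpace X] [MeasurableSpace N]

theorem measurable_forall_traj_notMem (hstep : Measurable fun q : X × N => f q.1 (π q.1) q.2)
    (hS : MeasurableSet S) (t : ℕ) :
    Measurable fun q : X × (ℕ → N) => ∀ s < t, traj f π q.1 q.2 s ∉ S :=
  Measurable.forall fun s =>
    measurable_const.imp ((measurable_mem.2 hS).comp (measurable_traj f π hstep s)).not

theorem measurable_survivalPotential (hstep : Measurable fun q : X × N => f q.1 (π q.1) q.2)
    (hS : MeasurableSet S) (hV : Measurable V) (t : ℕ) :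
    Measurable fun q : X × (ℕ → N) => survivalPotential f π S V ε t q.1 q.2 :=
  Measurable.ite (measurableSet_setOfPred.2 (measurable_forall_traj_notMem hstep hS t))
    ((ENNReal.measurable_ofReal.comp (hV.comp (measurable_traj f π hstep t))).add_const _)
    measurable_const

variable {d : Measure N} [IsProbabilityMeasure d]

theorem lintegral_survivalPotential_le (hstep : Measurable fun q : X × N => f q.1 (π q.1) q.2)
    (hS : MeasurableSet S) (hV : Measurable V) (hV0 : ∀ x, 0 ≤ V x) (hε : 0 ≤ ε)
    (hint : ∀ x ∉ S, Integrable (fun w => V (f x (π x) w)) d)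
    (hdec : ∀ x ∉ S, ∫ w, V (f x (π x) w) ∂d ≤ V x - ε) (t : ℕ) (x : X) :
    ∫⁻ ω, survivalPotential f π S V ε t x ω ∂(Measure.infinitePi fun _ => d)
      ≤ ENNReal.ofReal (V x) := by
  induction t generalizing x with
  | zero => simp [survivalPotential, traj]
  | succ t ih =>
    by_cases hx : x ∈ S
    · simp [survivalPotential_succ_of_mem f π S V ε hx]
    have hg : Measurable fun q : N × (ℕ → N) =>
        survivalPotential f π S V ε t (f x (π x) q.1) q.2 :=
      (measurable_survivalPotential hstep hS hV t).comp
        ((hstep.comp (measurable_const.prodMk measurable_fst)).prodMk measurable_snd)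
    calc ∫⁻ ω, survivalPotential f π S V ε (t + 1) x ω ∂(Measure.infinitePi fun _ => d)
        ≤ ∫⁻ ω, (survivalPotential f π S V ε t (f x (π x) (ω 0)) (fun n => ω (n + 1))
            + ENNReal.ofReal ε) ∂(Measure.infinitePi fun _ => d) :=
          lintegral_mono fun ω => survivalPotential_succ_le f π S V ε x t ω
      _ = ∫⁻ w, ∫⁻ ω, survivalPotential f π S V ε t (f x (π x) w) ω
            ∂(Measure.infinitePi fun _ => d) ∂d + ENNReal.ofReal ε := by
          rw [lintegral_add_right _ measurable_const, lintegral_const, measure_univ, mul_one,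
            lintegral_head_tail_infinitePi d hg]
      _ ≤ ∫⁻ w, ENNReal.ofReal (V (f x (π x) w)) ∂d + ENNReal.ofReal ε := by
          gcongr with w; exact ih _
      _ = ENNReal.ofReal (∫ w, V (f x (π x) w) ∂d) + ENNReal.ofReal ε := by
          rw [ofReal_integral_eq_lintegral_ofReal (hint x hx) (ae_of_all _ fun w => hV0 _)]
      _ ≤ ENNReal.ofReal (V x - ε) + ENNReal.ofReal ε := by gcongr; exact hdec x hx
      _ = ENNReal.ofReal (V x) := by
          rw [← ENNReal.ofReal_add ((integral_nonneg fun w => hV0 _).trans (hdec x hx)) hε,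
            sub_add_cancel]

theorem measure_forall_traj_notMem_le (hstep : Measurable fun q : X × N => f q.1 (π q.1) q.2)
    (hS : MeasurableSet S) (hV : Measurable V) (hV0 : ∀ x, 0 ≤ V x) (hε : 0 ≤ ε)
    (hint : ∀ x ∉ S, Integrable (fun w => V (f x (π x) w)) d)
    (hdec : ∀ x ∉ S, ∫ w, V (f x (π x) w) ∂d ≤ V x - ε) (t : ℕ) (x : X) :
    t * ENNReal.ofReal ε * (Measure.infinitePi fun _ => d) {ω | ∀ s < t, traj f π x ω s ∉ S}
      ≤ ENNReal.ofReal (V x) := by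
  have hA : MeasurableSet {ω : ℕ → N | ∀ s < t, traj f π x ω s ∉ S} :=
    measurableSet_setOfPred.2
      ((measurable_forall_traj_notMem hstep hS t).comp measurable_prodMk_left)
  calc t * ENNReal.ofReal ε * (Measure.infinitePi fun _ => d) {ω | ∀ s < t, traj f π x ω s ∉ S}
      = ∫⁻ ω, {ω | ∀ s < t, traj f π x ω s ∉ S}.indicator (fun _ => t * ENNReal.ofReal ε) ω
          ∂(Measure.infinitePi fun _ => d) := (lintegral_indicator_const hA _).symm
    _ ≤ ∫⁻ ω, survivalPotential f π S V ε t x ω ∂(Measure.infinitePi fun _ => d) := by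
        refine lintegral_mono fun ω => ?_
        simp only [Set.indicator, Set.mem_ofPred_eq, survivalPotential]
        split_ifs
        exacts [le_add_left le_rfl, le_rfl]
    _ ≤ ENNReal.ofReal (V x) := lintegral_survivalPotential_le hstep hS hV hV0 hε hint hdec t x

theorem ae_exists_traj_mem (hstep : Measurable fun q : X × N => f q.1 (π q.1) q.2)
    (hS : MeasurableSet S) (hV : Measurable V) (hV0 : ∀ x, 0 ≤ V x) (hε : 0 < ε)
    (hint : ∀ x ∉ S, Integrable (fun w => V (f x (π x) w)) d)
    (hdec : ∀ x ∉ S, ∫ w, V (f x (π x) w) ∂d ≤ V x - ε) (x : X) :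
    ∀ᵐ ω ∂(Measure.infinitePi fun _ => d), ∃ t, traj f π x ω t ∈ S := by
  rw [ae_iff]
  simp only [not_exists]
  by_contra h
  obtain ⟨t, ht⟩ := ENNReal.exists_nat_mul_gt (mul_ne_zero (ENNReal.ofReal_pos.2 hε).ne' h)
    ENNReal.ofReal_ne_top (b := ENNReal.ofReal (V x))
  refine ht.not_ge
    (le_trans ?_ (measure_forall_traj_notMem_le hstep hS hV hV0 hε.le hint hdec t x))
  rw [← mul_assoc]
  gcongr with ω s
  exact fun hs _ => hs

end RankingSupermartingale

theorem stability_of_ranking_supermartingale_general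
    {n m p : ℕ} (X : Set (L1 n)) (U : Set (L1 m)) (N : Set (L1 p))
    (hX : IsCompact X)
    (f : X → U → N → X) (π : X → U)
    -- `f` and `π` are Lipschitz continuous (ℓ¹ norms):
    (Lf Lπ : NNReal)
    (hf : ∀ (x x' : X) (u u' : U) (ω ω' : N),
      dist (f x u ω) (f x' u' ω') ≤ Lf * (dist x x' + dist u u' + dist ω ω'))
    (hπ : ∀ x x' : X, dist (π x) (π x') ≤ Lπ * dist x x')
    -- `d` is a probability distribution on `N`:
    (d : Measure N) [IsProbabilityMeasure d]
    -- `μ` is the infinite product measure `d^ℕ` on `N^ℕ`, characterized on cylinders: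
    (μ : Measure (ℕ → N)) [IsProbabilityMeasure μ]
    (hμ : ∀ (s : Finset ℕ) (B : ℕ → Set N), (∀ i, MeasurableSet (B i)) →
      μ {ω | ∀ i ∈ s, ω i ∈ B i} = ∏ i ∈ s, d (B i))
    -- `Xs ⊆ X` is Borel measurable, has nonempty interior, and is closed under the dynamics:
    (Xs : Set (L1 n)) (hXsMeas : MeasurableSet Xs)
    (hclosed : ∀ (x : X) (ω : N), (x : L1 n) ∈ Xs → (f x (π x) ω : L1 n) ∈ Xs)
    -- `V` is a ranking supermartingale for `Xs`:
    (V : X → ℝ) (hVcont : Continuous V) (hVnonneg : ∀ x, 0 ≤ V x)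
    (ε : ℝ) (hε : 0 < ε)
    (hdec : ∀ x : X, (x : L1 n) ∉ Xs → ∫ ω, V (f x (π x) ω) ∂d ≤ V x - ε)
    -- then `Xs` is a.s. asymptotically stable:
    (x₀ : X) :
    ∀ᵐ ω ∂μ, Tendsto (fun t => Metric.infDist ((traj f π x₀ ω t : X) : L1 n) Xs)
      atTop (nhds 0) := by
  have : CompactSpace X := isCompact_iff_compactSpace.mp hX
  have hstep : Continuous fun q : X × N => f q.1 (π q.1) q.2 :=
    (LipschitzWith.uncurry₃_of_dist_le hf).continuous.comp <| continuous_fst.prodMk <|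
      ((LipschitzWith.of_dist_le_mul hπ).continuous.comp continuous_fst).prodMk continuous_snd
  obtain ⟨C, hC⟩ := (isCompact_range hVcont).isBounded.exists_norm_le
  have hint (x : X) : Integrable (fun w => V (f x (π x) w)) d :=
    .of_bound (hVcont.comp (hstep.comp (Continuous.prodMk_right x))).aestronglyMeasurable C
      (ae_of_all _ fun _ => hC _ ⟨_, rfl⟩)
  obtain rfl : μ = Measure.infinitePi fun _ => d := Measure.eq_infinitePi (fun _ => d) hμ
  filter_upwards [ae_exists_traj_mem (S := Subtype.val ⁻¹' Xs) hstep.measurable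
    (measurable_subtype_coe hXsMeas) hVcont.measurable hVnonneg hε (fun x _ => hint x) hdec x₀]
    with ω ⟨s, hs⟩
  refine tendsto_const_nhds.congr' (eventually_atTop.2 ⟨s, fun t hst => ?_⟩)
  exact (Metric.infDist_zero_of_mem (s := Xs)
    (traj_mem_of_le f π (S := Subtype.val ⁻¹' Xs) hclosed hs hst)).symm

/-- If a ranking supermartingale exists for a set `Xs` that is closed under
the dynamics and has nonempty interior, then `Xs` is almost-surely asymptotically stable:
from every initial state, for `d^ℕ`-almost every noise sequence, the ℓ¹ distance of the
trajectory to `Xs` tends to `0`. -/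
theorem stability_of_ranking_supermartingale
    {n m p : ℕ} (X : Set (L1 n)) (U : Set (L1 m)) (N : Set (L1 p))
    (hX : IsCompact X)
    (f : X → U → N → X) (π : X → U)
    -- `f` and `π` are Lipschitz continuous (ℓ¹ norms):
    (Lf Lπ : NNReal)
    (hf : ∀ (x x' : X) (u u' : U) (ω ω' : N),
      dist (f x u ω) (f x' u' ω') ≤ Lf * (dist x x' + dist u u' + dist ω ω'))
    (hπ : ∀ x x' : X, dist (π x) (π x') ≤ Lπ * dist x x')
    -- `d` is a probability distribution on `N`:
    (d : Measure N) [IsProbabilityMeasure d]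
    -- `μ` is the infinite product measure `d^ℕ` on `N^ℕ`, characterized on cylinders:
    (μ : Measure (ℕ → N)) [IsProbabilityMeasure μ]
    (hμ : ∀ (s : Finset ℕ) (B : ℕ → Set N), (∀ i, MeasurableSet (B i)) →
      μ {ω | ∀ i ∈ s, ω i ∈ B i} = ∏ i ∈ s, d (B i))
    -- `Xs ⊆ X` is Borel measurable, has nonempty interior, and is closed under the dynamics:
    (Xs : Set (L1 n)) (hXsX : Xs ⊆ X) (hXsMeas : MeasurableSet Xs)
    (hXsInt : (interior Xs).Nonempty)
    (hclosed : ∀ (x : X) (ω : N), (x : L1 n) ∈ Xs → (f x (π x) ω : L1 n) ∈ Xs)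
    -- `V` is a ranking supermartingale for `Xs`:
    (V : X → ℝ) (hVcont : Continuous V) (hVnonneg : ∀ x, 0 ≤ V x)
    (ε : ℝ) (hε : 0 < ε)
    (hdec : ∀ x : X, (x : L1 n) ∉ Xs → ∫ ω, V (f x (π x) ω) ∂d ≤ V x - ε)
    -- then `Xs` is a.s. asymptotically stable:
    (x₀ : X) :
    ∀ᵐ ω ∂μ, Tendsto (fun t => Metric.infDist ((traj f π x₀ ω t : X) : L1 n) Xs)
      atTop (nhds 0) :=
  stability_of_ranking_supermartingale_general X U N hX f π Lf Lπ hf hπ d μ hμ Xs hXsMeas hclosed V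
    hVcont hVnonneg ε hε hdec x₀
end

section
/- Let X ⊆ ℝⁿ be compact, f : X × U × N → X be L_f-Lipschitz in (x, u) (with respect to the ℓ¹ norm on the product, uniformly in ω), π : X → U be L_π-Lipschitz, V : X → ℝ be nonnegative, continuous, and L_V-Lipschitz, and d a probability distribution on N. Let X_s ⊆ X, let τ > 0, and let X̃ ⊆ X be a finite discretization of X \ X_s with mesh τ, i.e. for every x ∈ X \ X_s there exists x̃ ∈ X̃ with ‖x − x̃‖₁ < τ. Set K = L_V · (L_f · (L_π + 1) + 1). If for every x̃ ∈ X̃ the strict inequality E_{ω∼d}[V(f(x̃, π(x̃), ω))] < V(x̃) − τ·K holds, then there exists ε > 0 such that for every x ∈ X \ X_s, E_{ω∼d}[V(f(x, π(x), ω))] ≤ V(x) − ε; that is, V is a ranking supermartingale for X_s. -/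
open MeasureTheory Filter

/-!
Along the closed loop `x ↦ f x (π x) ω` the map `x ↦ V (f x (π x) ω)` is
`L_V·L_f·(L_π+1)`-Lipschitz for every `ω`, hence so is its expectation, and `V` itself is
`L_V`-Lipschitz. Moving from a grid point `x̃` to a point `x` at distance `< τ` therefore costs
at most `τ·K` of the expected decrease, and the strict inequalities on the finite grid leave a
uniform margin `ε > 0`.
-/

open scoped NNReal Topology

namespace MeasureTheory

variable {α E : Type*} [MeasurableSpace α] {μ : Measure α} [IsProbabilityMeasure μ]
  [NormedAddCommGroup E] [NormedSpace ℝ E]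

theorem dist_integral_le_of_ae_dist_le {g h : α → E} {c : ℝ}
    (hg : AEStronglyMeasurable g μ) (hh : AEStronglyMeasurable h μ)
    (hgh : ∀ᵐ a ∂μ, dist (g a) (h a) ≤ c) :
    dist (∫ a, g a ∂μ) (∫ a, h a ∂μ) ≤ c := by
  -- A bounded difference makes `g` and `h` integrable together; when neither is, both
  -- integrals are the junk value `0`.
  have hgh' : ∀ᵐ a ∂μ, ‖(g - h) a‖ ≤ c := by simpa only [Pi.sub_apply, dist_eq_norm] using hgh
  have hdiff : Integrable (g - h) μ := .of_bound (hg.sub hh) c hgh'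
  by_cases hh_int : Integrable h μ
  · have hg_int : Integrable g μ := by simpa using hdiff.add hh_int
    rw [dist_eq_norm, ← integral_sub hg_int hh_int]
    simpa using norm_integral_le_of_norm_le_const hgh'
  · have hg_int : ¬ Integrable g μ := fun hg_int => hh_int (by simpa using hg_int.sub hdiff)
    obtain ⟨a, ha⟩ := hgh.exists
    rw [integral_undef hg_int, integral_undef hh_int, dist_self]
    exact dist_nonneg.trans ha

end MeasureTheory

theorem dist_comp_closedLoop_le {X U N Y : Type*} [PseudoMetricSpace X] [PseudoMetricSpace U]
    [PseudoMetricSpace Y] {f : X → U → N → X} {π : X → U} {V : X → Y} {Lf Lπ LV : ℝ≥0}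
    (hf : ∀ (ω : N) (x x' : X) (u u' : U),
      dist (f x u ω) (f x' u' ω) ≤ Lf * (dist x x' + dist u u'))
    (hπ : ∀ x x' : X, dist (π x) (π x') ≤ Lπ * dist x x')
    (hV : ∀ x x' : X, dist (V x) (V x') ≤ LV * dist x x') (ω : N) (x x' : X) :
    dist (V (f x (π x) ω)) (V (f x' (π x') ω)) ≤ LV * (Lf * (Lπ + 1)) * dist x x' :=
  calc dist (V (f x (π x) ω)) (V (f x' (π x') ω))
      ≤ LV * dist (f x (π x) ω) (f x' (π x') ω) := hV _ _
    _ ≤ LV * (Lf * (dist x x' + Lπ * dist x x')) := by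
      gcongr
      exact (hf ω x x' _ _).trans (by gcongr; exact hπ x x')
    _ = LV * (Lf * (Lπ + 1)) * dist x x' := by ring

theorem Set.Finite.exists_pos_forall_le {ι : Type*} {s : Set ι} (hs : s.Finite) {g : ι → ℝ}
    (hg : ∀ i ∈ s, 0 < g i) : ∃ ε > 0, ∀ i ∈ s, ε ≤ g i :=
  ((hs.eventually_all.2 fun i hi => nhdsWithin_le_nhds (eventually_le_nhds (hg i hi))).and
    (self_mem_nhdsWithin : Set.Ioi (0 : ℝ) ∈ 𝓝[>] 0)).exists.imp fun _ h => ⟨h.2, h.1⟩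

theorem rsm_of_discretized_strict_decrease_general
    {n m p : ℕ} (X : Set (L1 n)) (U : Set (L1 m)) (N : Set (L1 p))
    (f : X → U → N → X) (π : X → U) (V : X → ℝ)
    (Lf Lπ LV : NNReal)
    -- `f` is `L_f`-Lipschitz in `(x,u)` (ℓ¹ norm on the product), uniformly in `ω`:
    (hf : ∀ (ω : N) (x x' : X) (u u' : U),
      dist (f x u ω) (f x' u' ω) ≤ Lf * (dist x x' + dist u u'))
    -- `π` is `L_π`-Lipschitz:
    (hπ : ∀ x x' : X, dist (π x) (π x') ≤ Lπ * dist x x')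
    (hV : ∀ x x' : X, dist (V x) (V x') ≤ LV * dist x x')
    -- `d` is a probability distribution on `N` (and the expectations are well defined):
    (d : Measure N) [IsProbabilityMeasure d]
    (hmeas : ∀ x : X, Measurable fun ω : N => V (f x (π x) ω))
    (Xs : Set (L1 n))
    (τ : ℝ)
    (Xtil : Set X) (hXtilFin : Xtil.Finite)
    (hmesh : ∀ x : X, (x : L1 n) ∉ Xs → ∃ xt ∈ Xtil, dist x xt < τ)
    -- the strict decrease condition holds at every discretization point:
    (hstrict : ∀ xt ∈ Xtil,
      ∫ ω, V (f xt (π xt) ω) ∂d < V xt - τ * (LV * (Lf * (Lπ + 1) + 1))) :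
    -- then `V` is a ranking supermartingale for `X_s`:
    ∃ ε > (0 : ℝ), ∀ x : X, (x : L1 n) ∉ Xs →
      ∫ ω, V (f x (π x) ω) ∂d ≤ V x - ε := by
  set C : ℝ := LV * (Lf * (Lπ + 1))
  obtain ⟨ε, hε, hεle⟩ := hXtilFin.exists_pos_forall_le fun xt hxt => sub_pos.2 (hstrict xt hxt)
  refine ⟨ε, hε, fun x hx => ?_⟩
  obtain ⟨xt, hxt, hdist⟩ := hmesh x hx
  have hI : ∫ ω, V (f x (π x) ω) ∂d ≤ ∫ ω, V (f xt (π xt) ω) ∂d + C * dist x xt :=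
    sub_le_iff_le_add'.1 (abs_sub_le_iff.1 (dist_integral_le_of_ae_dist_le
      (hmeas x).aestronglyMeasurable (hmeas xt).aestronglyMeasurable
      (.of_forall (dist_comp_closedLoop_le hf hπ hV · x xt)))).1
  have hVxt : V xt ≤ V x + LV * dist x xt := by
    linarith [(abs_sub_le_iff.1 (hV x xt)).2]
  have hC : C * dist x xt ≤ C * τ := by gcongr
  have hLV : LV * dist x xt ≤ LV * τ := by gcongr
  linarith [hεle xt hxt]

/-- Soundness of the discretization-based verifier: if the strict expected
decrease condition `E[V(f(x̃,π(x̃),ω))] < V(x̃) − τ·K` with `K = L_V·(L_f·(L_π+1)+1)` holds on a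
finite discretization `X̃` of `X \ X_s` with mesh `τ`, then `V` is a ranking supermartingale
for `X_s`. -/
theorem rsm_of_discretized_strict_decrease
    {n m p : ℕ} (X : Set (L1 n)) (U : Set (L1 m)) (N : Set (L1 p))
    (hX : IsCompact X)
    (f : X → U → N → X) (π : X → U) (V : X → ℝ)
    (Lf Lπ LV : NNReal)
    -- `f` is `L_f`-Lipschitz in `(x,u)` (ℓ¹ norm on the product), uniformly in `ω`:
    (hf : ∀ (ω : N) (x x' : X) (u u' : U),
      dist (f x u ω) (f x' u' ω) ≤ Lf * (dist x x' + dist u u'))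
    -- `π` is `L_π`-Lipschitz:
    (hπ : ∀ x x' : X, dist (π x) (π x') ≤ Lπ * dist x x')
    -- `V` is nonnegative, continuous and `L_V`-Lipschitz:
    (hVnonneg : ∀ x, 0 ≤ V x) (hVcont : Continuous V)
    (hV : ∀ x x' : X, dist (V x) (V x') ≤ LV * dist x x')
    -- `d` is a probability distribution on `N` (and the expectations are well defined):
    (d : Measure N) [IsProbabilityMeasure d]
    (hmeas : ∀ x : X, Measurable fun ω : N => V (f x (π x) ω))
    (Xs : Set (L1 n))
    -- `X̃ ⊆ X` is a finite discretization of `X \ X_s` with mesh `τ`: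
    (τ : ℝ) (hτ : 0 < τ)
    (Xtil : Set X) (hXtilFin : Xtil.Finite)
    (hmesh : ∀ x : X, (x : L1 n) ∉ Xs → ∃ xt ∈ Xtil, dist x xt < τ)
    -- the strict decrease condition holds at every discretization point:
    (hstrict : ∀ xt ∈ Xtil,
      ∫ ω, V (f xt (π xt) ω) ∂d < V xt - τ * (LV * (Lf * (Lπ + 1) + 1))) :
    -- then `V` is a ranking supermartingale for `X_s`:
    ∃ ε > (0 : ℝ), ∀ x : X, (x : L1 n) ∉ Xs →
      ∫ ω, V (f x (π x) ω) ∂d ≤ V x - ε :=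
  rsm_of_discretized_strict_decrease_general X U N f π V Lf Lπ LV hf hπ hV d hmeas Xs τ Xtil
    hXtilFin hmesh hstrict
end

section
/- Let f : X × U × N → X be L_f-Lipschitz in (x, u) with respect to the ℓ¹ norm on the product (uniformly in ω), π : X → U be L_π-Lipschitz, V : X → ℝ be L_V-Lipschitz and bounded with ω ↦ V(f(x, π(x), ω)) measurable for each x, and d a probability distribution on N. Set K = L_V · (L_f · (L_π + 1) + 1). Then for all x, x̃ ∈ X with ‖x − x̃‖₁ ≤ τ, E_{ω∼d}[V(f(x, π(x), ω))] − V(x) ≤ E_{ω∼d}[V(f(x̃, π(x̃), ω))] − V(x̃) + τ·K. In particular, if E_{ω∼d}[V(f(x̃, π(x̃), ω))] < V(x̃) − τ·K, then E_{ω∼d}[V(f(x, π(x), ω))] < V(x). -/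
/-!
For each noise value `ω` the closed-loop map `x ↦ f x (π x) ω` is `Lf (Lπ + 1)`-Lipschitz, so
`x ↦ V (f x (π x) ω)` is `LV Lf (Lπ + 1)`-Lipschitz uniformly in `ω`; taking expectations keeps
this bound, and the term `- V x` adds `LV`. Boundedness of `V` only serves to make the
expectations genuine integrals.
-/

open MeasureTheory Filter

open NNReal

lemma integral_sub_integral_le_of_forall_sub_le {Ω : Type*} [MeasurableSpace Ω]
    {μ : Measure Ω} [IsProbabilityMeasure μ] {F G : Ω → ℝ} (hF : Integrable F μ)
    (hG : Integrable G μ) {c : ℝ} (h : ∀ ω, F ω - G ω ≤ c) :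
    (∫ ω, F ω ∂μ) - ∫ ω, G ω ∂μ ≤ c := by
  rw [← integral_sub hF hG]
  simpa using integral_mono (hF.sub hG) (integrable_const c) h

section ClosedLoop

variable {α β : Type*} [PseudoMetricSpace α] [PseudoMetricSpace β]

lemma dist_closedLoop_le {γ : Type*} [PseudoMetricSpace γ] {g : α → β → γ} {π : α → β}
    {Lg Lπ : ℝ≥0} (hg : ∀ x x' u u', dist (g x u) (g x' u') ≤ Lg * (dist x x' + dist u u'))
    (hπ : ∀ x x', dist (π x) (π x') ≤ Lπ * dist x x') (x x' : α) :
    dist (g x (π x)) (g x' (π x')) ≤ Lg * (Lπ + 1) * dist x x' :=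
  calc dist (g x (π x)) (g x' (π x'))
      ≤ Lg * (dist x x' + Lπ * dist x x') := by grw [hg, hπ]
    _ = Lg * (Lπ + 1) * dist x x' := by ring

theorem expected_drift_le_add_mul_dist {Ω : Type*} [MeasurableSpace Ω] (μ : Measure Ω)
    [IsProbabilityMeasure μ] {f : α → β → Ω → α} {π : α → β} {V : α → ℝ} {Lf Lπ LV : ℝ≥0}
    (hf : ∀ ω x x' u u', dist (f x u ω) (f x' u' ω) ≤ Lf * (dist x x' + dist u u'))
    (hπ : ∀ x x', dist (π x) (π x') ≤ Lπ * dist x x')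
    (hV : ∀ x x', dist (V x) (V x') ≤ LV * dist x x')
    (hint : ∀ x, Integrable (fun ω => V (f x (π x) ω)) μ) (x x' : α) :
    (∫ ω, V (f x (π x) ω) ∂μ) - V x ≤
      (∫ ω, V (f x' (π x') ω) ∂μ) - V x' + dist x x' * (LV * (Lf * (Lπ + 1) + 1)) := by
  have hstep : ∀ ω, V (f x (π x) ω) - V (f x' (π x') ω) ≤ LV * (Lf * (Lπ + 1) * dist x x') :=
    fun ω => calc V (f x (π x) ω) - V (f x' (π x') ω)
        ≤ LV * dist (f x (π x) ω) (f x' (π x') ω) := (le_abs_self _).trans (hV _ _)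
      _ ≤ LV * (Lf * (Lπ + 1) * dist x x') := by
        grw [dist_closedLoop_le (hf ω) hπ x x']
  have hmean := integral_sub_integral_le_of_forall_sub_le (hint x) (hint x') hstep
  have hV' : V x' - V x ≤ LV * dist x x' := by
    simpa [dist_comm x] using (le_abs_self _).trans (hV x' x)
  linarith

end ClosedLoop

theorem expected_decrease_transfer_general
    {n m p : ℕ} (X : Set (L1 n)) (U : Set (L1 m)) (N : Set (L1 p))
    (f : X → U → N → X) (π : X → U) (V : X → ℝ)
    (Lf Lπ LV : NNReal)
    (hf : ∀ (ω : N) (x x' : X) (u u' : U),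
      dist (f x u ω) (f x' u' ω) ≤ Lf * (dist x x' + dist u u'))
    (hπ : ∀ x x' : X, dist (π x) (π x') ≤ Lπ * dist x x')
    (hV : ∀ x x' : X, dist (V x) (V x') ≤ LV * dist x x')
    (hVbdd : ∃ C : ℝ, ∀ x : X, |V x| ≤ C)
    (hmeas : ∀ x : X, Measurable fun ω : N => V (f x (π x) ω))
    (d : Measure N) [IsProbabilityMeasure d]
    (τ : ℝ) :
    (∀ x xt : X, dist x xt ≤ τ →
      (∫ ω, V (f x (π x) ω) ∂d) - V x ≤
        (∫ ω, V (f xt (π xt) ω) ∂d) - V xt + τ * (LV * (Lf * (Lπ + 1) + 1))) ∧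
    (∀ x xt : X, dist x xt ≤ τ →
      (∫ ω, V (f xt (π xt) ω) ∂d) < V xt - τ * (LV * (Lf * (Lπ + 1) + 1)) →
      (∫ ω, V (f x (π x) ω) ∂d) < V x) := by
  obtain ⟨C, hC⟩ := hVbdd
  have hint : ∀ x : X, Integrable (fun ω => V (f x (π x) ω)) d := fun x =>
    .of_bound (hmeas x).aestronglyMeasurable C (.of_forall fun ω => hC _)
  have htransfer : ∀ x xt : X, dist x xt ≤ τ →
      (∫ ω, V (f x (π x) ω) ∂d) - V x ≤
        (∫ ω, V (f xt (π xt) ω) ∂d) - V xt + τ * (LV * (Lf * (Lπ + 1) + 1)) := by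
    intro x xt hτ
    have := expected_drift_le_add_mul_dist d (fun ω => hf ω) hπ hV hint x xt
    grw [hτ] at this
    exact this
  exact ⟨htransfer, fun x xt hτ hlt => by linarith [htransfer x xt hτ]⟩

/-- With `K = L_V·(L_f·(L_π+1)+1)`, for all `x, x̃ ∈ X` with `‖x−x̃‖₁ ≤ τ`,
`E[V(f(x,π(x),ω))] − V(x) ≤ E[V(f(x̃,π(x̃),ω))] − V(x̃) + τ·K`; in particular, if
`E[V(f(x̃,π(x̃),ω))] < V(x̃) − τ·K` then `E[V(f(x,π(x),ω))] < V(x)`. -/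
theorem expected_decrease_transfer
    {n m p : ℕ} (X : Set (L1 n)) (U : Set (L1 m)) (N : Set (L1 p))
    (hXmeas : MeasurableSet X) (hUmeas : MeasurableSet U) (hNmeas : MeasurableSet N)
    (f : X → U → N → X) (π : X → U) (V : X → ℝ)
    (Lf Lπ LV : NNReal)
    (hf : ∀ (ω : N) (x x' : X) (u u' : U),
      dist (f x u ω) (f x' u' ω) ≤ Lf * (dist x x' + dist u u'))
    (hπ : ∀ x x' : X, dist (π x) (π x') ≤ Lπ * dist x x')
    (hV : ∀ x x' : X, dist (V x) (V x') ≤ LV * dist x x')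
    (hVbdd : ∃ C : ℝ, ∀ x : X, |V x| ≤ C)
    (hmeas : ∀ x : X, Measurable fun ω : N => V (f x (π x) ω))
    (d : Measure N) [IsProbabilityMeasure d]
    (τ : ℝ) :
    (∀ x xt : X, dist x xt ≤ τ →
      (∫ ω, V (f x (π x) ω) ∂d) - V x ≤
        (∫ ω, V (f xt (π xt) ω) ∂d) - V xt + τ * (LV * (Lf * (Lπ + 1) + 1))) ∧
    (∀ x xt : X, dist x xt ≤ τ →
      (∫ ω, V (f xt (π xt) ω) ∂d) < V xt - τ * (LV * (Lf * (Lπ + 1) + 1)) →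
      (∫ ω, V (f x (π x) ω) ∂d) < V x) :=
  expected_decrease_transfer_general X U N f π V Lf Lπ LV hf hπ hV hVbdd hmeas d τ
end

section
/- Let (Ω, F, P) be a probability space, (F_t)_{t∈ℕ} a filtration, (Y_t)_{t∈ℕ} an (F_t)-adapted sequence of nonnegative integrable real random variables, T : Ω → ℕ ∪ {∞} an (F_t)-stopping time, and ε > 0. Suppose that for every t ∈ ℕ, E[Y_{t+1} | F_t] ≤ Y_t − ε holds P-almost everywhere on the event {T > t}. Then P[T < ∞] = 1. -/
open MeasureTheory Filter

/-! On `{T > t}` the drift condition gives, after integrating,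
`∫_{T > t+1} Y_{t+1} + ε P(T > t) ≤ ∫_{T > t} Y_t`, since `{T > t}` is `F_t`-measurable and
`{T > t+1} ⊆ {T > t}`. As `P(T > t) ≥ P(T = ∞)`, the nonnegative quantities
`∫_{T > t} Y_t` decrease by at least `ε P(T = ∞)` at every step, which forces `P(T = ∞) = 0`. -/

theorem nonpos_of_forall_succ_add_le {a : ℕ → ℝ} {δ : ℝ} (ha : ∀ n, 0 ≤ a n)
    (hstep : ∀ n, a (n + 1) + δ ≤ a n) : δ ≤ 0 := by
  have hdrop : ∀ n : ℕ, a n + n * δ ≤ a 0 := by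
    intro n
    induction n with
    | zero => simp
    | succ n ih => push_cast; linarith [hstep n]
  by_contra! hδ
  obtain ⟨n, hn⟩ := exists_nat_gt (a 0 / δ)
  rw [div_lt_iff₀ hδ] at hn
  linarith [hdrop n, ha n]

theorem setIntegral_le_of_ae_condExp_le {Ω : Type*} {m m0 : MeasurableSpace Ω} {μ : Measure Ω}
    (hm : m ≤ m0) [SigmaFinite (μ.trim hm)] {f g : Ω → ℝ} {s : Set Ω} (hf : Integrable f μ)
    (hg : IntegrableOn g s μ) (hs : MeasurableSet[m] s) (hle : ∀ᵐ x ∂μ, x ∈ s → μ[f|m] x ≤ g x) :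
    ∫ x in s, f x ∂μ ≤ ∫ x in s, g x ∂μ := by
  rw [← setIntegral_condExp hm hf hs]
  exact setIntegral_mono_ae_restrict integrable_condExp.integrableOn hg
    ((ae_restrict_iff' (hm s hs)).2 hle)

section RankingSupermartingale

variable {Ω : Type*} {m0 : MeasurableSpace Ω} {P : Measure Ω} [IsFiniteMeasure P]
  {F : Filtration ℕ m0} {Y : ℕ → Ω → ℝ} {T : Ω → ℕ∞} {ε : ℝ}

theorem setIntegral_lt_succ_add_le (hint : ∀ t, Integrable (Y t) P) (hnonneg : ∀ t x, 0 ≤ Y t x)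
    (hT : IsStoppingTime F T) (hε : 0 ≤ ε) (t : ℕ)
    (hdec : ∀ᵐ x ∂P, (t : ℕ∞) < T x → (P[Y (t + 1)|F t]) x ≤ Y t x - ε) :
    ∫ x in {x | ((t + 1 : ℕ) : ℕ∞) < T x}, Y (t + 1) x ∂P + ε * P.real {x | T x = ⊤}
      ≤ ∫ x in {x | (t : ℕ∞) < T x}, Y t x ∂P := by
  set A : Set Ω := {x | (t : ℕ∞) < T x}
  have hA : MeasurableSet[F t] A := hT.measurableSet_gt t
  have hshrink : ∫ x in {x | ((t + 1 : ℕ) : ℕ∞) < T x}, Y (t + 1) x ∂P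
      ≤ ∫ x in A, Y (t + 1) x ∂P := by
    refine setIntegral_mono_set (hint (t + 1)).integrableOn
      (Eventually.of_forall (hnonneg (t + 1))) (Eventually.of_forall fun x hx => ?_)
    exact lt_trans (by exact_mod_cast t.lt_succ_self) hx
  have hdrift : ∫ x in A, Y (t + 1) x ∂P ≤ ∫ x in A, Y t x ∂P - ε * P.real A := by
    calc ∫ x in A, Y (t + 1) x ∂P ≤ ∫ x in A, (Y t x - ε) ∂P :=
          setIntegral_le_of_ae_condExp_le (F.le t) (hint (t + 1))
            ((hint t).sub (integrable_const ε)).integrableOn hA hdec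
      _ = ∫ x in A, Y t x ∂P - ε * P.real A := by
          rw [integral_sub (hint t).integrableOn (integrable_const ε).integrableOn,
            setIntegral_const, smul_eq_mul, mul_comm]
  have hinf : ε * P.real {x | T x = ⊤} ≤ ε * P.real A :=
    mul_le_mul_of_nonneg_left (measureReal_mono fun x (hx : T x = ⊤) => by simp [A, hx]) hε
  linarith

end RankingSupermartingale

theorem stoppingTime_ae_finite_of_rsm_general
    {Ω : Type*} {m0 : MeasurableSpace Ω} (P : Measure Ω) [IsProbabilityMeasure P]
    (F : Filtration ℕ m0)
    (Y : ℕ → Ω → ℝ)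
    (hint : ∀ t, Integrable (Y t) P)
    (hnonneg : ∀ t x, 0 ≤ Y t x)
    (T : Ω → ℕ∞)
    (hT : ∀ t : ℕ, MeasurableSet[F t] {x | T x ≤ (t : ℕ∞)})
    (ε : ℝ) (hε : 0 < ε)
    (hdec : ∀ t : ℕ, ∀ᵐ x ∂P, (t : ℕ∞) < T x → (P[Y (t + 1)|F t]) x ≤ Y t x - ε) :
    P {x | T x < ⊤} = 1 := by
  have hstop : IsStoppingTime F T := hT
  have hdrift_nonpos : ε * P.real {x | T x = ⊤} ≤ 0 :=
    nonpos_of_forall_succ_add_le (a := fun t => ∫ x in {x | (t : ℕ∞) < T x}, Y t x ∂P)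
      (fun t => setIntegral_nonneg_of_ae (Eventually.of_forall (hnonneg t)))
      (fun t => setIntegral_lt_succ_add_le hint hnonneg hstop hε.le t (hdec t))
  have hnull : P {x | T x = ⊤} = 0 := by
    rw [← measureReal_eq_zero_iff]
    exact le_antisymm (nonpos_of_mul_nonpos_right hdrift_nonpos hε) measureReal_nonneg
  have hcompl : {x | T x < ⊤}ᶜ = {x | T x = ⊤} := by ext x; simp [lt_top_iff_ne_top]
  rw [measure_congr (ae_eq_univ.2 (hcompl ▸ hnull)), measure_univ]

/-- Ranking-supermartingale termination principle: if an adapted sequence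
of nonnegative integrable random variables decreases in conditional expectation by at least
`ε > 0` on the event `{T > t}` for every `t`, then the stopping time `T` is almost surely
finite. -/
theorem stoppingTime_ae_finite_of_rsm
    {Ω : Type*} {m0 : MeasurableSpace Ω} (P : Measure Ω) [IsProbabilityMeasure P]
    (F : Filtration ℕ m0)
    (Y : ℕ → Ω → ℝ)
    (hadapted : Adapted F Y)
    (hint : ∀ t, Integrable (Y t) P)
    (hnonneg : ∀ t x, 0 ≤ Y t x)
    (T : Ω → ℕ∞)
    (hT : ∀ t : ℕ, MeasurableSet[F t] {x | T x ≤ (t : ℕ∞)})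
    (ε : ℝ) (hε : 0 < ε)
    (hdec : ∀ t : ℕ, ∀ᵐ x ∂P, (t : ℕ∞) < T x → (P[Y (t + 1)|F t]) x ≤ Y t x - ε) :
    P {x | T x < ⊤} = 1 :=
  stoppingTime_ae_finite_of_rsm_general P F Y hint hnonneg T hT ε hε hdec
end

section
/- Let (Ω, F, P) be a probability space, (F_t)_{t∈ℕ} a filtration, (Y_t)_{t∈ℕ} an (F_t)-adapted sequence of nonnegative integrable real random variables, T : Ω → ℕ ∪ {∞} an (F_t)-stopping time, and ε > 0. Suppose that for every t ∈ ℕ, E[Y_{t+1} | F_t] ≤ Y_t − ε holds P-almost everywhere on the event {T > t}. Then E[T] ≤ E[Y_0] / ε. -/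
/-!
The expected value `∫_{T > t} Y t` of the ranking supermartingale restricted to the event that the
process has not stopped yet drops by at least `ε · P[T > t]` in each step: conditioning on `F t`
(where `{T > t}` is measurable) trades `Y (t + 1)` for its conditional expectation, and
nonnegativity allows shrinking `{T > t}` to `{T > t + 1}`. Telescoping gives
`ε ∑_{t < n} P[T > t] ≤ E[Y 0]` for every `n`.
-/

open MeasureTheory Filter

lemma mul_sum_range_le_of_mul_add_le {a b : ℕ → ℝ} {c : ℝ} (hb : ∀ n, 0 ≤ b n)
    (hstep : ∀ t, c * a t + b (t + 1) ≤ b t) (n : ℕ) :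
    c * ∑ t ∈ Finset.range n, a t ≤ b 0 := by
  suffices h : ∀ n, c * ∑ t ∈ Finset.range n, a t + b n ≤ b 0 by linarith [h n, hb n]
  intro n
  induction n with
  | zero => simp
  | succ n ih =>
    rw [Finset.sum_range_succ, mul_add]
    linarith [hstep n]

lemma ENNReal.tsum_le_ofReal_of_sum_range_toReal_le {f : ℕ → ENNReal} {c : ℝ} (hf : ∀ t, f t ≠ ⊤)
    (hc : 0 ≤ c) (hsum : ∀ n, ∑ t ∈ Finset.range n, (f t).toReal ≤ c) :
    ∑' t, f t ≤ ENNReal.ofReal c := by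
  refine ENNReal.tsum_le_of_sum_range_le fun n => ?_
  rw [ENNReal.le_ofReal_iff_toReal_le (ENNReal.sum_ne_top.2 fun t _ => hf t) hc,
    ENNReal.toReal_sum fun t _ => hf t]
  exact hsum n

lemma measurableSet_lt_of_measurableSet_le {Ω : Type*} {m0 : MeasurableSpace Ω}
    {F : Filtration ℕ m0} {T : Ω → ℕ∞} (hT : ∀ t : ℕ, MeasurableSet[F t] {x | T x ≤ t}) (t : ℕ) :
    MeasurableSet[F t] {x | (t : ℕ∞) < T x} := by
  simpa only [Set.compl_ofPred, not_le] using (hT t).compl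

section DriftStep

variable {Ω : Type*} {m m0 : MeasurableSpace Ω} {μ : Measure Ω} [IsFiniteMeasure μ]
  {f g : Ω → ℝ} {s u : Set Ω} {ε : ℝ}

lemma mul_measureReal_add_setIntegral_le_of_condExp_le (hm : m ≤ m0) (hs : MeasurableSet[m] s)
    (hf : Integrable f μ) (hg : Integrable g μ)
    (hdrift : ∀ᵐ x ∂μ, x ∈ s → μ[g|m] x ≤ f x - ε) :
    ε * μ.real s + ∫ x in s, g x ∂μ ≤ ∫ x in s, f x ∂μ := by
  have hcond : ∫ x in s, μ[g|m] x ∂μ ≤ ∫ x in s, (f x - ε) ∂μ := by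
    refine setIntegral_mono_ae_restrict integrable_condExp.integrableOn
      (hf.sub (integrable_const ε)).integrableOn ?_
    rw [EventuallyLE, ae_restrict_iff' (hm s hs)]
    exact hdrift
  rw [setIntegral_condExp hm hg hs, integral_sub hf.integrableOn (integrable_const ε).integrableOn,
    setIntegral_const, smul_eq_mul] at hcond
  linarith

lemma mul_measureReal_add_setIntegral_subset_le_of_condExp_le (hm : m ≤ m0)
    (hs : MeasurableSet[m] s) (hus : u ⊆ s) (hf : Integrable f μ) (hg : Integrable g μ)
    (hg_nonneg : 0 ≤ g) (hdrift : ∀ᵐ x ∂μ, x ∈ s → μ[g|m] x ≤ f x - ε) :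
    ε * μ.real s + ∫ x in u, g x ∂μ ≤ ∫ x in s, f x ∂μ := by
  have hmono : ∫ x in u, g x ∂μ ≤ ∫ x in s, g x ∂μ :=
    setIntegral_mono_set hg.integrableOn (Eventually.of_forall hg_nonneg)
      (Eventually.of_forall hus)
  linarith [mul_measureReal_add_setIntegral_le_of_condExp_le hm hs hf hg hdrift]

end DriftStep

theorem stoppingTime_expectation_le_of_rsm_general
    {Ω : Type*} {m0 : MeasurableSpace Ω} (P : Measure Ω) [IsProbabilityMeasure P]
    (F : Filtration ℕ m0)
    (Y : ℕ → Ω → ℝ)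
    (hint : ∀ t, Integrable (Y t) P)
    (hnonneg : ∀ t x, 0 ≤ Y t x)
    (T : Ω → ℕ∞)
    (hT : ∀ t : ℕ, MeasurableSet[F t] {x | T x ≤ (t : ℕ∞)})
    (ε : ℝ) (hε : 0 < ε)
    (hdec : ∀ t : ℕ, ∀ᵐ x ∂P, (t : ℕ∞) < T x → (P[Y (t + 1)|F t]) x ≤ Y t x - ε) :
    ∑' t : ℕ, P {x | (t : ℕ∞) < T x} ≤ ENNReal.ofReal ((∫ x, Y 0 x ∂P) / ε) := by
  set A : ℕ → Set Ω := fun t => {x | (t : ℕ∞) < T x}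
  have hA_anti : ∀ t, A (t + 1) ⊆ A t := fun t x (hx : ((t + 1 : ℕ) : ℕ∞) < T x) =>
    lt_of_le_of_lt (by exact_mod_cast Nat.le_succ t) hx
  have hstep : ∀ t, ε * P.real (A t) + ∫ x in A (t + 1), Y (t + 1) x ∂P ≤ ∫ x in A t, Y t x ∂P :=
    fun t => mul_measureReal_add_setIntegral_subset_le_of_condExp_le (F.le t)
      (measurableSet_lt_of_measurableSet_le hT t) (hA_anti t) (hint t) (hint (t + 1))
      (hnonneg (t + 1)) (hdec t)
  have hY0 : ∫ x in A 0, Y 0 x ∂P ≤ ∫ x, Y 0 x ∂P :=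
    setIntegral_le_integral (hint 0) (Eventually.of_forall (hnonneg 0))
  refine ENNReal.tsum_le_ofReal_of_sum_range_toReal_le (fun t => measure_ne_top P _)
    (div_nonneg (integral_nonneg (hnonneg 0)) hε.le) fun n => ?_
  rw [le_div_iff₀ hε, mul_comm]
  exact (mul_sum_range_le_of_mul_add_le
    (fun t => setIntegral_nonneg_of_ae_restrict (Eventually.of_forall (hnonneg t))) hstep n).trans hY0

/-- Quantitative ranking-supermartingale termination principle: if an
adapted sequence of nonnegative integrable random variables decreases in conditional
expectation by at least `ε > 0` on the event `{T > t}` for every `t`, then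
`E[T] = ∑_{t≥0} P[T > t] ≤ E[Y₀]/ε`. -/
theorem stoppingTime_expectation_le_of_rsm
    {Ω : Type*} {m0 : MeasurableSpace Ω} (P : Measure Ω) [IsProbabilityMeasure P]
    (F : Filtration ℕ m0)
    (Y : ℕ → Ω → ℝ)
    (hadapted : Adapted F Y)
    (hint : ∀ t, Integrable (Y t) P)
    (hnonneg : ∀ t x, 0 ≤ Y t x)
    (T : Ω → ℕ∞)
    (hT : ∀ t : ℕ, MeasurableSet[F t] {x | T x ≤ (t : ℕ∞)})
    (ε : ℝ) (hε : 0 < ε)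
    (hdec : ∀ t : ℕ, ∀ᵐ x ∂P, (t : ℕ∞) < T x → (P[Y (t + 1)|F t]) x ≤ Y t x - ε) :
    ∑' t : ℕ, P {x | (t : ℕ∞) < T x} ≤ ENNReal.ofReal ((∫ x, Y 0 x ∂P) / ε) :=
  stoppingTime_expectation_le_of_rsm_general P F Y hint hnonneg T hT ε hε hdec
end

section
/- Let X ⊆ ℝⁿ be compact, f : X × U × N → X Borel measurable, π : X → U Borel measurable, d a probability distribution on N, X_s ⊆ X Borel measurable, V : X → ℝ nonnegative and continuous, and ε > 0 such that for every x ∈ X \ X_s, E_{ω∼d}[V(f(x, π(x), ω))] ≤ V(x) − ε. Fix x₀ ∈ X, let the trajectory on the product space (N^ℕ, d^ℕ) be x_{t+1}(ω) = f(x_t(ω), π(x_t(ω)), ω_t), and let A_t = {ω ∈ N^ℕ : x_s(ω) ∉ X_s for all s ≤ t} be the event that X_s has not been reached by time t. Then for every t ∈ ℕ, E_{d^ℕ}[V(x_{t+1}) · 1_{A_{t+1}}] ≤ E_{d^ℕ}[V(x_t) · 1_{A_t}] − ε · P_{d^ℕ}[A_{t+1}]. -/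
open MeasureTheory Filter

/-!
On the event `A_{t+1} ⊆ A_t` we have `V(x_{t+1}) = V(f(x_t, π x_t, ω_t))`, and both `x_t` and `A_t`
depend only on `ω_0, …, ω_{t-1}`. Since replacing `ω_t` by a fresh sample from `d` leaves `d^ℕ`
invariant, `ω_t` can be integrated out first; the expected-decrease condition then bounds the inner
integral by `V(x_t) - ε` on `A_t`, and `P[A_{t+1}] ≤ P[A_t]`.
-/

section ResampleCoordinate

variable {ι α : Type*} [DecidableEq ι] [MeasurableSpace α]
  {d : Measure α} [IsProbabilityMeasure d] {μ : Measure (ι → α)} [IsProbabilityMeasure μ]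
  (hμ : ∀ (s : Finset ι) (B : ι → Set α), (∀ i, MeasurableSet (B i)) →
    μ {ω | ∀ i ∈ s, ω i ∈ B i} = ∏ i ∈ s, d (B i))
include hμ

theorem measurePreserving_update_prod (j : ι) :
    MeasurePreserving (fun p : (ι → α) × α => Function.update p.1 j p.2) (μ.prod d) μ := by
  refine ⟨measurable_update', ext_of_generate_finite _ generateFrom_squareCylinders.symm
    (isPiSystem_squareCylinders (fun _ => MeasurableSpace.isPiSystem_measurableSet)
      fun _ => MeasurableSet.univ) ?_
    (by rw [Measure.map_apply measurable_update' .univ]; simp)⟩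
  rintro _ ⟨s, B, hB, rfl⟩
  simp only [Set.mem_univ_pi, Set.mem_ofPred_eq] at hB
  have hpre : (fun p : (ι → α) × α => Function.update p.1 j p.2) ⁻¹' (s : Set ι).pi B =
      {ω | ∀ i ∈ s.erase j, ω i ∈ B i} ×ˢ (if j ∈ s then B j else Set.univ) := by
    ext ⟨ω, y⟩
    simp only [Set.mem_preimage, Set.mem_pi, Finset.mem_coe, Set.mem_prod, Set.mem_ofPred_eq,
      Finset.mem_erase, Function.update_apply]
    constructor
    · intro h
      refine ⟨fun i ⟨hij, hi⟩ => by simpa [hij] using h i hi, ?_⟩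
      split_ifs with hj
      · simpa using h j hj
      · trivial
    · rintro ⟨h, hy⟩ i hi
      split_ifs with hij
      · subst hij; simpa [hi] using hy
      · exact h i ⟨hij, hi⟩
  have hbox : (s : Set ι).pi B = {ω | ∀ i ∈ s, ω i ∈ B i} := by ext; simp
  rw [Measure.map_apply measurable_update' (MeasurableSet.pi s.countable_toSet fun i _ => hB i),
    hpre, Measure.prod_prod, hμ _ _ hB, hbox, hμ _ _ hB]
  split_ifs with hj
  · exact Finset.prod_erase_mul s _ hj
  · rw [Finset.erase_eq_of_notMem hj, measure_univ, mul_one]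

theorem integral_eq_integral_integral_update (j : ι) {F : (ι → α) → ℝ} (hF : Integrable F μ) :
    ∫ ω, F ω ∂μ = ∫ ω, ∫ y, F (Function.update ω j y) ∂d ∂μ := by
  have hupd := measurePreserving_update_prod hμ j
  calc ∫ ω, F ω ∂μ = ∫ p, F (Function.update p.1 j p.2) ∂(μ.prod d) := by
        rw [← integral_map measurable_update'.aemeasurable (by rw [hupd.map_eq]; exact hF.1),
          hupd.map_eq]
    _ = _ := integral_prod _ (hupd.integrable_comp_of_integrable hF)

end ResampleCoordinate

section Trajectory

variable {X U N : Type*} (f : X → U → N → X) (π : X → U) (x₀ : X)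

def notHitUntil (S : Set X) (k : ℕ) : Set (ℕ → N) :=
  {ω | ∀ s ≤ k, traj f π x₀ ω s ∉ S}

theorem notHitUntil_succ_subset (S : Set X) (k : ℕ) :
    notHitUntil (N := N) f π x₀ S (k + 1) ⊆ notHitUntil f π x₀ S k :=
  fun _ hω s hs => hω s (hs.trans k.le_succ)

theorem traj_update_of_le (ω : ℕ → N) (y : N) {j : ℕ} :
    ∀ {s}, s ≤ j → traj f π x₀ (Function.update ω j y) s = traj f π x₀ ω s
  | 0, _ => rfl
  | s + 1, hs => by
    simp only [traj, traj_update_of_le ω y (s.le_succ.trans hs),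
      Function.update_of_ne (Nat.lt_of_succ_le hs).ne]

theorem update_mem_notHitUntil_iff (S : Set X) (ω : ℕ → N) (y : N) (k : ℕ) :
    Function.update ω k y ∈ notHitUntil f π x₀ S k ↔ ω ∈ notHitUntil f π x₀ S k := by
  simp +contextual only [notHitUntil, Set.mem_ofPred_eq, traj_update_of_le]

variable [MeasurableSpace X] [MeasurableSpace U] [MeasurableSpace N]
  {f π} (hf : Measurable fun q : X × U × N => f q.1 q.2.1 q.2.2) (hπ : Measurable π)
include hf hπ

theorem measurable_traj_s10 : ∀ s, Measurable fun ω : ℕ → N => traj f π x₀ ω s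
  | 0 => measurable_const
  | s + 1 => hf.comp <| (measurable_traj_s10 s).prodMk <|
      (hπ.comp (measurable_traj_s10 s)).prodMk (measurable_pi_apply s)

theorem measurableSet_notHitUntil {S : Set X} (hS : MeasurableSet S) (k : ℕ) :
    MeasurableSet (notHitUntil (N := N) f π x₀ S k) := by
  simp only [notHitUntil, Set.ofPred_forall]
  exact .iInter fun s => .iInter fun _ => measurable_traj_s10 x₀ hf hπ s hS.compl

theorem integrable_comp_traj {μ : Measure (ℕ → N)} [IsFiniteMeasure μ] {V : X → ℝ}
    (hV : Measurable V) {C : ℝ} (hVC : ∀ x, ‖V x‖ ≤ C) (s : ℕ) :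
    Integrable (fun ω => V (traj f π x₀ ω s)) μ :=
  .of_bound (hV.comp (measurable_traj_s10 x₀ hf hπ s)).aestronglyMeasurable C
    (ae_of_all _ fun _ => hVC _)

variable {d : Measure N} [IsProbabilityMeasure d] {μ : Measure (ℕ → N)} [IsProbabilityMeasure μ]
  (hμ : ∀ (s : Finset ℕ) (B : ℕ → Set N), (∀ i, MeasurableSet (B i)) →
    μ {ω | ∀ i ∈ s, ω i ∈ B i} = ∏ i ∈ s, d (B i))
  {S : Set X} (hS : MeasurableSet S)
include hμ hS

theorem integral_indicator_notHitUntil_traj_succ {V : X → ℝ} (hV : Measurable V) {C : ℝ}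
    (hVC : ∀ x, ‖V x‖ ≤ C) (t : ℕ) :
    ∫ ω, (notHitUntil f π x₀ S t).indicator (fun ω => V (traj f π x₀ ω (t + 1))) ω ∂μ =
      ∫ ω, (notHitUntil f π x₀ S t).indicator
        (fun ω => ∫ y, V (f (traj f π x₀ ω t) (π (traj f π x₀ ω t)) y) ∂d) ω ∂μ := by
  rw [integral_eq_integral_integral_update hμ t
    ((integrable_comp_traj x₀ hf hπ hV hVC (t + 1)).indicator
      (measurableSet_notHitUntil x₀ hf hπ hS t))]
  refine integral_congr_ae (ae_of_all _ fun ω => ?_)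
  by_cases hω : ω ∈ notHitUntil f π x₀ S t
  · rw [Set.indicator_of_mem hω]
    refine integral_congr_ae (ae_of_all _ fun y => ?_)
    dsimp only
    rw [Set.indicator_of_mem ((update_mem_notHitUntil_iff f π x₀ S ω y t).mpr hω)]
    simp only [traj, traj_update_of_le f π x₀ ω y le_rfl, Function.update_self]
  · rw [Set.indicator_of_notMem hω]
    simp only [Set.indicator_of_notMem (mt (update_mem_notHitUntil_iff f π x₀ S ω _ t).mp hω),
      integral_zero]

theorem integral_indicator_notHitUntil_succ_le {V : X → ℝ} (hV : Measurable V)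
    (hV0 : ∀ x, 0 ≤ V x) {C : ℝ} (hVC : ∀ x, V x ≤ C) {ε : ℝ} (hε : 0 ≤ ε)
    (hdec : ∀ x ∉ S, ∫ y, V (f x (π x) y) ∂d ≤ V x - ε) (t : ℕ) :
    ∫ ω, (notHitUntil f π x₀ S (t + 1)).indicator (fun ω => V (traj f π x₀ ω (t + 1))) ω ∂μ ≤
      ∫ ω, (notHitUntil f π x₀ S t).indicator (fun ω => V (traj f π x₀ ω t)) ω ∂μ
        - ε * μ.real (notHitUntil f π x₀ S (t + 1)) := by
  set A := notHitUntil f π x₀ S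
  have hA := measurableSet_notHitUntil x₀ hf hπ hS
  have hVC' (x : X) : ‖V x‖ ≤ C := by rw [Real.norm_of_nonneg (hV0 x)]; exact hVC x
  have hVint := integrable_comp_traj x₀ hf hπ (μ := μ) hV hVC'
  have hshrink : ∫ ω, (A (t + 1)).indicator (fun ω => V (traj f π x₀ ω (t + 1))) ω ∂μ ≤
      ∫ ω, (A t).indicator (fun ω => V (traj f π x₀ ω (t + 1))) ω ∂μ :=
    integral_mono_of_nonneg (ae_of_all _ fun ω => Set.indicator_nonneg (fun _ _ => hV0 _) ω)
      ((hVint (t + 1)).indicator (hA t))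
      (ae_of_all _ fun ω => Set.indicator_le_indicator_of_subset
        (notHitUntil_succ_subset f π x₀ S t) (fun _ => hV0 _) ω)
  have hdrift : ∫ ω, (A t).indicator
        (fun ω => ∫ y, V (f (traj f π x₀ ω t) (π (traj f π x₀ ω t)) y) ∂d) ω ∂μ ≤
      ∫ ω, (A t).indicator (fun ω => V (traj f π x₀ ω t) - ε) ω ∂μ := by
    refine integral_mono_of_nonneg (ae_of_all _ fun ω => Set.indicator_nonneg
        (fun _ _ => integral_nonneg fun _ => hV0 _) ω)
      (((hVint t).sub (integrable_const ε)).indicator (hA t))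
      (ae_of_all _ fun ω => ?_)
    by_cases hω : ω ∈ A t
    · simp only [Set.indicator_of_mem hω]
      exact hdec _ (hω t le_rfl)
    · simp only [Set.indicator_of_notMem hω, le_refl]
  have hsplit : ∫ ω, (A t).indicator (fun ω => V (traj f π x₀ ω t) - ε) ω ∂μ =
      ∫ ω, (A t).indicator (fun ω => V (traj f π x₀ ω t)) ω ∂μ - ε * μ.real (A t) := by
    rw [integral_indicator (hA t), integral_indicator (hA t),
      integral_sub (hVint t).integrableOn (integrable_const ε), setIntegral_const, smul_eq_mul,
      mul_comm]
  calc _ ≤ _ := hshrink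
    _ = _ := integral_indicator_notHitUntil_traj_succ x₀ hf hπ hμ hS hV hVC' t
    _ ≤ _ := hdrift
    _ = _ := hsplit
    _ ≤ _ := sub_le_sub_left (mul_le_mul_of_nonneg_left
        (measureReal_mono (notHitUntil_succ_subset f π x₀ S t)) hε) _

end Trajectory

/-- Drift inequality for the stopped value process: with
`A_t = {ω : x_s(ω) ∉ X_s for all s ≤ t}`,
`E[V(x_{t+1})·1_{A_{t+1}}] ≤ E[V(x_t)·1_{A_t}] − ε·P[A_{t+1}]`. -/
theorem rsm_drift_inequality
    {n m p : ℕ} (X : Set (L1 n)) (U : Set (L1 m)) (N : Set (L1 p))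
    (hX : IsCompact X)
    (f : X → U → N → X) (π : X → U)
    (hfmeas : Measurable fun q : X × U × N => f q.1 q.2.1 q.2.2)
    (hπmeas : Measurable π)
    (d : Measure N) [IsProbabilityMeasure d]
    -- `μ` is the infinite product measure `d^ℕ` on `N^ℕ`, characterized on cylinders:
    (μ : Measure (ℕ → N)) [IsProbabilityMeasure μ]
    (hμ : ∀ (s : Finset ℕ) (B : ℕ → Set N), (∀ i, MeasurableSet (B i)) →
      μ {ω | ∀ i ∈ s, ω i ∈ B i} = ∏ i ∈ s, d (B i))
    (Xs : Set (L1 n)) (hXsMeas : MeasurableSet Xs)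
    (V : X → ℝ) (hVnonneg : ∀ x, 0 ≤ V x) (hVcont : Continuous V)
    (ε : ℝ) (hε : 0 < ε)
    (hdec : ∀ x : X, (x : L1 n) ∉ Xs → ∫ ω, V (f x (π x) ω) ∂d ≤ V x - ε)
    (x₀ : X) (t : ℕ) :
    ∫ ω, Set.indicator
        {ω' : ℕ → N | ∀ s ≤ t + 1, ((traj f π x₀ ω' s : X) : L1 n) ∉ Xs}
        (fun ω' => V (traj f π x₀ ω' (t + 1))) ω ∂μ ≤
      (∫ ω, Set.indicator
        {ω' : ℕ → N | ∀ s ≤ t, ((traj f π x₀ ω' s : X) : L1 n) ∉ Xs}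
        (fun ω' => V (traj f π x₀ ω' t)) ω ∂μ)
      - ε * (μ {ω' : ℕ → N | ∀ s ≤ t + 1, ((traj f π x₀ ω' s : X) : L1 n) ∉ Xs}).toReal := by
  have := isCompact_iff_compactSpace.mp hX
  obtain ⟨C, hC⟩ := (isCompact_range hVcont).bddAbove
  exact integral_indicator_notHitUntil_succ_le x₀ hfmeas hπmeas hμ
    (measurable_subtype_coe hXsMeas) hVcont.measurable hVnonneg (fun x => hC ⟨x, rfl⟩) hε.le
    hdec t
end

section
/- Let X ⊆ ℝⁿ be compact, f : X × U × N → X Borel measurable, π : X → U Borel measurable, d a probability distribution on N, X_s ⊆ X Borel measurable, V : X → ℝ nonnegative and continuous, and ε > 0 such that for every x ∈ X \ X_s, E_{ω∼d}[V(f(x, π(x), ω))] ≤ V(x) − ε. Fix x₀ ∈ X and let x_{t+1}(ω) = f(x_t(ω), π(x_t(ω)), ω_t) for ω ∈ N^ℕ. Then for every t ≥ 1, the probability (under d^ℕ) that the trajectory has not reached X_s by time t is at most V(x₀)/(ε·t): P_{d^ℕ}[x_s ∉ X_s for all s ≤ t] ≤ V(x₀)/(ε·t). -/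
/-!
Let `A k` be the event that the trajectory avoids `X_s` up to time `k` and
`E k = ∫_{A k} V(x_k)`. Both `x_k` and `A k` depend only on `ω_0, …, ω_{k-1}`, which are
independent of `ω_k`; integrating out `ω_k` and applying the decrease condition on `A k` gives
`E (k+1) + ε P(A (k+1)) ≤ E k`. Telescoping and monotonicity of `A` yield
`ε t P(A t) ≤ E 0 ≤ V(x₀)`.
-/

open MeasureTheory Filter

open ProbabilityTheory ENNReal

namespace ProbabilityTheory

variable {Ω β γ : Type*} {mΩ : MeasurableSpace Ω} [MeasurableSpace β] [mγ : MeasurableSpace γ]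
  {μ : Measure Ω} [IsFiniteMeasure μ] {Z : Ω → γ}

theorem IndepFun.lintegral_comp {Y : Ω → β} (hYZ : IndepFun Y Z μ) (hY : Measurable Y)
    (hZ : Measurable Z) {H : β → γ → ℝ≥0∞} (hH : Measurable (Function.uncurry H)) :
    ∫⁻ ω, H (Y ω) (Z ω) ∂μ = ∫⁻ ω, ∫⁻ z, H (Y ω) z ∂(μ.map Z) ∂μ := by
  calc ∫⁻ ω, H (Y ω) (Z ω) ∂μ
      = ∫⁻ q, H q.1 q.2 ∂(μ.map fun ω ↦ (Y ω, Z ω)) :=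
        (lintegral_map hH (hY.prodMk hZ)).symm
    _ = ∫⁻ y, ∫⁻ z, H y z ∂(μ.map Z) ∂(μ.map Y) := by
        rw [(indepFun_iff_map_prod_eq_prod_map_map hY.aemeasurable hZ.aemeasurable).1 hYZ]
        exact lintegral_prod _ hH.aemeasurable
    _ = ∫⁻ ω, ∫⁻ z, H (Y ω) z ∂(μ.map Z) ∂μ := lintegral_map hH.lintegral_prod_right' hY

theorem setLIntegral_comp_of_indep {ν : Measure γ} (hZ : Measurable Z) (hZν : μ.map Z = ν)
    {m : MeasurableSpace Ω} (hm : m ≤ mΩ) (hind : Indep m (mγ.comap Z) μ) {W : Ω → β}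
    (hW : Measurable[m] W) {A : Set Ω} (hA : MeasurableSet[m] A) {H : β → γ → ℝ≥0∞}
    (hH : Measurable (Function.uncurry H)) :
    ∫⁻ ω in A, H (W ω) (Z ω) ∂μ = ∫⁻ ω in A, ∫⁻ z, H (W ω) z ∂ν ∂μ := by
  -- carry the indicator of `A` along with `W`, turning both set integrals into full ones
  have hY : Measurable[m] fun ω ↦ (W ω, A.indicator (1 : Ω → ℝ≥0∞) ω) :=
    hW.prodMk (measurable_one.indicator hA)
  have hYZ : IndepFun (fun ω ↦ (W ω, A.indicator (1 : Ω → ℝ≥0∞) ω)) Z μ :=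
    indep_of_indep_of_le_left hind hY.comap_le
  have key := hYZ.lintegral_comp (hY.mono hm le_rfl) hZ (H := fun y z ↦ y.2 * H y.1 z)
    (measurable_fst.snd.mul (hH.comp (measurable_fst.fst.prodMk measurable_snd)))
  have hsection : ∀ w, Measurable (H w) := fun w ↦ hH.comp (measurable_const.prodMk measurable_id)
  have hset : ∀ F : Ω → ℝ≥0∞, ∫⁻ ω, A.indicator 1 ω * F ω ∂μ = ∫⁻ ω in A, F ω ∂μ := fun F ↦ by
    rw [← lintegral_indicator (hm _ hA)]
    simp only [← Set.indicator_mul_left, Pi.one_apply, one_mul]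
  simpa only [lintegral_const_mul _ (hsection _), hset, hZν] using key

end ProbabilityTheory

lemma lintegral_ofReal_add_le_of_integral_le_sub {α : Type*} [MeasurableSpace α]
    {μ : Measure α} {g : α → ℝ} (hg : Integrable g μ) (hg0 : 0 ≤ g) {a ε : ℝ} (hε : 0 ≤ ε)
    (h : ∫ x, g x ∂μ ≤ a - ε) :
    ∫⁻ x, ENNReal.ofReal (g x) ∂μ + ENNReal.ofReal ε ≤ ENNReal.ofReal a := by
  rw [← ofReal_integral_eq_lintegral_ofReal hg (ae_of_all _ hg0),
    ← ENNReal.ofReal_add (integral_nonneg hg0) hε]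
  exact ENNReal.ofReal_le_ofReal (by linarith)

section FirstCoordinates

variable {N : Type*} [mN : MeasurableSpace N]

abbrev firstCoords (N : Type*) [MeasurableSpace N] (k : ℕ) : MeasurableSpace (ℕ → N) :=
  ⨆ j < k, MeasurableSpace.comap (fun ω ↦ ω j) ‹_›

lemma firstCoords_le (k : ℕ) : firstCoords N k ≤ MeasurableSpace.pi :=
  iSup₂_le fun j _ ↦ (measurable_pi_apply j).comap_le

lemma firstCoords_mono : Monotone (firstCoords N) := fun _ _ hkl ↦
  iSup₂_mono' fun j hj ↦ ⟨j, hj.trans_le hkl, le_rfl⟩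

lemma measurable_apply_firstCoords {j k : ℕ} (hjk : j < k) :
    Measurable[firstCoords N k] fun ω : ℕ → N ↦ ω j :=
  Measurable.of_comap_le (le_iSup₂ (f := fun j _ ↦ mN.comap fun ω : ℕ → N ↦ ω j) j hjk)

lemma indep_firstCoords_comap_apply (d : Measure N) [IsProbabilityMeasure d] (k : ℕ) :
    Indep (firstCoords N k) (mN.comap fun ω ↦ ω k) (Measure.infinitePi fun _ ↦ d) := by
  have hcoords : iIndepFun (fun i (ω : ℕ → N) ↦ ω i) (Measure.infinitePi fun _ ↦ d) :=
    iIndepFun_infinitePi (X := fun _ ↦ id) fun _ ↦ measurable_id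
  have := indep_iSup_of_disjoint (fun i ↦ (measurable_pi_apply i).comap_le)
    ((iIndepFun_iff_iIndep _ _ _).1 hcoords) (Set.disjoint_singleton_right.2 (lt_irrefl k) :
      Disjoint (Set.Iio k) {k})
  rwa [iSup_singleton] at this

end FirstCoordinates

lemma add_mul_natCast_mul_le_of_antitone {E p : ℕ → ℝ≥0∞} {ε : ℝ≥0∞} (hp : Antitone p)
    (hstep : ∀ k, E (k + 1) + ε * p (k + 1) ≤ E k) (k : ℕ) : E k + ε * k * p k ≤ E 0 := by
  induction k with
  | zero => simp
  | succ k ih =>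
    calc E (k + 1) + ε * ↑(k + 1) * p (k + 1)
        = (E (k + 1) + ε * p (k + 1)) + ε * k * p (k + 1) := by push_cast; ring
      _ ≤ E k + ε * k * p k := add_le_add (hstep k) (mul_le_mul_right (hp k.le_succ) _)
      _ ≤ E 0 := ih

section Trajectory

variable {X U N : Type*} {f : X → U → N → X} {π : X → U}

def notReachedBy (f : X → U → N → X) (π : X → U) (x₀ : X) (T : Set X) (k : ℕ) :
    Set (ℕ → N) :=
  {ω | ∀ s ≤ k, traj f π x₀ ω s ∉ T}

lemma notReachedBy_antitone (x₀ : X) (T : Set X) : Antitone (notReachedBy f π x₀ T) :=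
  fun _ _ hkl _ hω s hs ↦ hω s (hs.trans hkl)

variable [MeasurableSpace X] [MeasurableSpace U] [MeasurableSpace N]

lemma measurable_traj_firstCoords (hf : Measurable fun q : X × U × N ↦ f q.1 q.2.1 q.2.2)
    (hπ : Measurable π) (x₀ : X) (k : ℕ) :
    Measurable[firstCoords N k] fun ω ↦ traj f π x₀ ω k := by
  induction k with
  | zero => exact measurable_const
  | succ k ih =>
    have ih' := ih.mono (firstCoords_mono k.le_succ) le_rfl
    exact hf.comp (ih'.prodMk ((hπ.comp ih').prodMk (measurable_apply_firstCoords k.lt_succ_self)))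

lemma measurableSet_notReachedBy_firstCoords
    (hf : Measurable fun q : X × U × N ↦ f q.1 q.2.1 q.2.2) (hπ : Measurable π) (x₀ : X)
    {T : Set X} (hT : MeasurableSet T) (k : ℕ) :
    MeasurableSet[firstCoords N k] (notReachedBy f π x₀ T k) := by
  simp only [notReachedBy, Set.ofPred_forall]
  refine MeasurableSet.iInter fun s ↦ MeasurableSet.iInter fun hs : s ≤ k ↦ ?_
  exact ((measurable_traj_firstCoords hf hπ x₀ s).mono (firstCoords_mono hs) le_rfl) hT.compl

variable (d : Measure N) [IsProbabilityMeasure d]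

lemma setLIntegral_notReachedBy_succ_add_le
    (hf : Measurable fun q : X × U × N ↦ f q.1 q.2.1 q.2.2) (hπ : Measurable π) (x₀ : X)
    {T : Set X} (hT : MeasurableSet T) {V : X → ℝ≥0∞} (hV : Measurable V) {ε : ℝ≥0∞}
    (hdec : ∀ x ∉ T, ∫⁻ ν, V (f x (π x) ν) ∂d + ε ≤ V x) (k : ℕ) :
    ∫⁻ ω in notReachedBy f π x₀ T (k + 1), V (traj f π x₀ ω (k + 1))
        ∂Measure.infinitePi (fun _ ↦ d)
      + ε * Measure.infinitePi (fun _ ↦ d) (notReachedBy f π x₀ T (k + 1))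
      ≤ ∫⁻ ω in notReachedBy f π x₀ T k, V (traj f π x₀ ω k)
          ∂Measure.infinitePi (fun _ ↦ d) := by
  set P := Measure.infinitePi fun _ : ℕ ↦ d
  set A := notReachedBy f π x₀ T k
  have hA := measurableSet_notReachedBy_firstCoords hf hπ x₀ hT k
  have hsucc : notReachedBy f π x₀ T (k + 1) ⊆ A := notReachedBy_antitone x₀ T k.le_succ
  have hH : Measurable fun q : X × N ↦ V (f q.1 (π q.1) q.2) :=
    hV.comp (hf.comp (measurable_fst.prodMk ((hπ.comp measurable_fst).prodMk measurable_snd)))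
  have hindep : ∫⁻ ω in A, V (traj f π x₀ ω (k + 1)) ∂P
      = ∫⁻ ω in A, ∫⁻ ν, V (f (traj f π x₀ ω k) (π (traj f π x₀ ω k)) ν) ∂d ∂P :=
    setLIntegral_comp_of_indep (measurable_pi_apply k) (Measure.infinitePi_map_eval _ k)
      (firstCoords_le k) (indep_firstCoords_comap_apply d k)
      (measurable_traj_firstCoords hf hπ x₀ k) hA (H := fun x ν ↦ V (f x (π x) ν)) hH
  calc _ ≤ ∫⁻ ω in A, V (traj f π x₀ ω (k + 1)) ∂P + ε * P A :=
        add_le_add (lintegral_mono_set hsucc) (mul_le_mul_right (measure_mono hsucc) _)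
    _ = ∫⁻ ω in A, (∫⁻ ν, V (f (traj f π x₀ ω k) (π (traj f π x₀ ω k)) ν) ∂d + ε) ∂P := by
        rw [hindep, lintegral_add_right _ measurable_const, setLIntegral_const, mul_comm]
    _ ≤ ∫⁻ ω in A, V (traj f π x₀ ω k) ∂P :=
        setLIntegral_mono' (firstCoords_le k _ hA) fun ω hω ↦ hdec _ (hω k le_rfl)

theorem mul_measure_notReachedBy_le
    (hf : Measurable fun q : X × U × N ↦ f q.1 q.2.1 q.2.2) (hπ : Measurable π) (x₀ : X)
    {T : Set X} (hT : MeasurableSet T) {V : X → ℝ≥0∞} (hV : Measurable V) {ε : ℝ≥0∞}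
    (hdec : ∀ x ∉ T, ∫⁻ ν, V (f x (π x) ν) ∂d + ε ≤ V x) (t : ℕ) :
    ε * t * Measure.infinitePi (fun _ ↦ d) (notReachedBy f π x₀ T t) ≤ V x₀ := by
  set P := Measure.infinitePi fun _ : ℕ ↦ d
  have hbound := add_mul_natCast_mul_le_of_antitone
    (E := fun k ↦ ∫⁻ ω in notReachedBy f π x₀ T k, V (traj f π x₀ ω k) ∂P)
    (fun _ _ hkl ↦ measure_mono (notReachedBy_antitone x₀ T hkl))
    (setLIntegral_notReachedBy_succ_add_le d hf hπ x₀ hT hV hdec) t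
  calc ε * t * P (notReachedBy f π x₀ T t)
      ≤ ∫⁻ ω in notReachedBy f π x₀ T t, V (traj f π x₀ ω t) ∂P
          + ε * t * P (notReachedBy f π x₀ T t) := le_add_self
    _ ≤ ∫⁻ _ in notReachedBy f π x₀ T 0, V x₀ ∂P := hbound
    _ ≤ V x₀ := by
        rw [setLIntegral_const]
        exact mul_le_of_le_one_right' prob_le_one

end Trajectory

theorem rsm_reachability_bound_general
    {n m p : ℕ} (X : Set (L1 n)) (U : Set (L1 m)) (N : Set (L1 p))
    (hX : IsCompact X)
    (f : X → U → N → X) (π : X → U)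
    (hfmeas : Measurable fun q : X × U × N => f q.1 q.2.1 q.2.2)
    (hπmeas : Measurable π)
    (d : Measure N) [IsProbabilityMeasure d]
    -- `μ` is the infinite product measure `d^ℕ` on `N^ℕ`, characterized on cylinders:
    (μ : Measure (ℕ → N))
    (hμ : ∀ (s : Finset ℕ) (B : ℕ → Set N), (∀ i, MeasurableSet (B i)) →
      μ {ω | ∀ i ∈ s, ω i ∈ B i} = ∏ i ∈ s, d (B i))
    (Xs : Set (L1 n)) (hXsMeas : MeasurableSet Xs)
    (V : X → ℝ) (hVnonneg : ∀ x, 0 ≤ V x) (hVcont : Continuous V)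
    (ε : ℝ) (hε : 0 < ε)
    (hdec : ∀ x : X, (x : L1 n) ∉ Xs → ∫ ω, V (f x (π x) ω) ∂d ≤ V x - ε)
    (x₀ : X) :
    ∀ t : ℕ, 1 ≤ t →
      (μ {ω : ℕ → N | ∀ s ≤ t, ((traj f π x₀ ω s : X) : L1 n) ∉ Xs}).toReal ≤
        V x₀ / (ε * t) := by
  intro t ht
  have hμ_eq : μ = Measure.infinitePi fun _ ↦ d := Measure.eq_infinitePi _ fun s B hB ↦ hμ s B hB
  have : CompactSpace X := isCompact_iff_compactSpace.mp hX
  -- `V` is bounded, so the Bochner integral in `hdec` is not the junk value of a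
  -- non-integrable function
  obtain ⟨C, hC⟩ := (isCompact_range hVcont).bddAbove
  have hdec' : ∀ x ∉ ((↑) : X → L1 n) ⁻¹' Xs,
      ∫⁻ ν, ENNReal.ofReal (V (f x (π x) ν)) ∂d + ENNReal.ofReal ε ≤ ENNReal.ofReal (V x) :=
    fun x hx ↦ lintegral_ofReal_add_le_of_integral_le_sub
      (Integrable.of_mem_Icc 0 C (by fun_prop) (ae_of_all _ fun _ ↦ ⟨hVnonneg _, hC ⟨_, rfl⟩⟩))
      (fun _ ↦ hVnonneg _) hε.le (hdec x hx)
  have hbound := mul_measure_notReachedBy_le d hfmeas hπmeas x₀ (measurable_subtype_coe hXsMeas)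
    (ENNReal.measurable_ofReal.comp hVcont.measurable) hdec' t
  rw [← hμ_eq, ← ENNReal.ofReal_natCast, ← ENNReal.ofReal_mul hε.le] at hbound
  have := ENNReal.toReal_le_of_le_ofReal (hVnonneg x₀) hbound
  rw [ENNReal.toReal_mul, ENNReal.toReal_ofReal (by positivity), mul_comm] at this
  rwa [le_div_iff₀ (by positivity)]

/-- Quantitative reachability bound: under a ranking supermartingale with
decrease `ε`, the probability that the trajectory has not reached `X_s` by time `t ≥ 1`
is at most `V(x₀)/(ε·t)`. -/
theorem rsm_reachability_bound
    {n m p : ℕ} (X : Set (L1 n)) (U : Set (L1 m)) (N : Set (L1 p))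
    (hX : IsCompact X)
    (f : X → U → N → X) (π : X → U)
    (hfmeas : Measurable fun q : X × U × N => f q.1 q.2.1 q.2.2)
    (hπmeas : Measurable π)
    (d : Measure N) [IsProbabilityMeasure d]
    -- `μ` is the infinite product measure `d^ℕ` on `N^ℕ`, characterized on cylinders:
    (μ : Measure (ℕ → N)) [IsProbabilityMeasure μ]
    (hμ : ∀ (s : Finset ℕ) (B : ℕ → Set N), (∀ i, MeasurableSet (B i)) →
      μ {ω | ∀ i ∈ s, ω i ∈ B i} = ∏ i ∈ s, d (B i))
    (Xs : Set (L1 n)) (hXsMeas : MeasurableSet Xs)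
    (V : X → ℝ) (hVnonneg : ∀ x, 0 ≤ V x) (hVcont : Continuous V)
    (ε : ℝ) (hε : 0 < ε)
    (hdec : ∀ x : X, (x : L1 n) ∉ Xs → ∫ ω, V (f x (π x) ω) ∂d ≤ V x - ε)
    (x₀ : X) :
    ∀ t : ℕ, 1 ≤ t →
      (μ {ω : ℕ → N | ∀ s ≤ t, ((traj f π x₀ ω s : X) : L1 n) ∉ Xs}).toReal ≤
        V x₀ / (ε * t) :=
  rsm_reachability_bound_general X U N hX f π hfmeas hπmeas d μ hμ Xs hXsMeas V hVnonneg hVcont ε hε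
    hdec x₀
end
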